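/- In the setting of power iteration on a symmetric matrix A with dominant simple eigenvalue λ_1 in magnitude (|λ_1|>|λ_2|≥…≥|λ_n|), orthonormal eigenvectors u_i, unit initial vector v_0 with α_1 = u_1^T v_0 ≠ 0, the Rayleigh quotient λ̂_k = v_k^T A v_k satisfies |λ̂_k - λ_1| ≤ (|λ_1| + |λ_2|) · (|λ_2|/|λ_1|)^{2k} · (1-α_1²)/α_1². -/

import Mathlib

/-!
Writing `v₀ = ∑ αᵢ uᵢ` in the eigenbasis, `v_k` is the normalization of `A^k v₀ = ∑ αᵢ λᵢ^k uᵢ`,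
so `λ̂_k = S_{2k+1} / S_{2k}` with `S_j = ∑ αᵢ² λᵢ^j`. Then
`S_{2k+1} - λ₁ S_{2k} = ∑_{i ≠ 1} αᵢ² λᵢ^{2k} (λᵢ - λ₁)` is at most
`(|λ₁| + |λ₂|) |λ₂|^{2k} (1 - α₁²)` in absolute value, while `S_{2k} ≥ α₁² λ₁^{2k}`.
-/

open Finset NormedSpace
open scoped RealInnerProductSpace

section PowerIteration

variable {E : Type*} [NormedAddCommGroup E] [NormedSpace ℝ E]

theorem normalize_map_normalize (T : E →ₗ[ℝ] E) (x : E) :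
    normalize (T (normalize x)) = normalize (T x) := by
  rcases eq_or_ne x 0 with rfl | hx
  · simp
  · rw [show normalize x = ‖x‖⁻¹ • x from rfl, map_smul,
      normalize_smul_of_pos (inv_pos.mpr (norm_pos_iff.mpr hx))]

theorem powerIteration_eq_normalize_pow (T : E →ₗ[ℝ] E) {v : ℕ → E} (hv0 : ‖v 0‖ = 1)
    (hrec : ∀ k, v (k + 1) = normalize (T (v k))) (k : ℕ) :
    v k = normalize ((T ^ k) (v 0)) := by
  induction k with
  | zero => rw [pow_zero, Module.End.one_apply, normalize_eq_self_of_norm_eq_one hv0]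
  | succ k ih => rw [hrec, ih, normalize_map_normalize, pow_succ', Module.End.mul_apply]

end PowerIteration

theorem real_inner_normalize_map_normalize {E : Type*} [NormedAddCommGroup E]
    [InnerProductSpace ℝ E] (T : E →ₗ[ℝ] E) (x : E) :
    ⟪normalize x, T (normalize x)⟫ = ⟪x, T x⟫ / ‖x‖ ^ 2 := by
  rw [NormedSpace.normalize, map_smul, real_inner_smul_left, real_inner_smul_right]
  ring

namespace OrthonormalBasis

variable {ι E : Type*} [Fintype ι] [NormedAddCommGroup E] [InnerProductSpace ℝ E]
  (b : OrthonormalBasis ι ℝ E) {T : E →ₗ[ℝ] E} {μ : ι → ℝ}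

theorem inner_map_of_apply_eq_smul (hT : ∀ i, T (b i) = μ i • b i) (x : E) (i : ι) :
    ⟪b i, T x⟫ = μ i * ⟪b i, x⟫ := by
  conv_lhs => rw [← b.sum_repr' x]
  simp only [map_sum, map_smul, hT, smul_smul]
  rw [b.orthonormal.inner_right_sum _ (mem_univ i), mul_comm]

theorem inner_pow_map_of_apply_eq_smul (hT : ∀ i, T (b i) = μ i • b i) (x : E) (i : ι)
    (k : ℕ) : ⟪b i, (T ^ k) x⟫ = μ i ^ k * ⟪b i, x⟫ := by
  induction k with
  | zero => simp
  | succ k ih =>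
    rw [pow_succ', Module.End.mul_apply, b.inner_map_of_apply_eq_smul hT, ih, pow_succ']
    ring

theorem inner_pow_map_pow_map_of_apply_eq_smul (hT : ∀ i, T (b i) = μ i • b i) (x : E)
    (j l : ℕ) : ⟪(T ^ j) x, (T ^ l) x⟫ = ∑ i, ⟪b i, x⟫ ^ 2 * μ i ^ (j + l) := by
  rw [← b.sum_inner_mul_inner]
  refine sum_congr rfl fun i _ => ?_
  rw [real_inner_comm, b.inner_pow_map_of_apply_eq_smul hT, b.inner_pow_map_of_apply_eq_smul hT,
    pow_add]
  ring

end OrthonormalBasis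

section SpectralMoment

variable {ι : Type*} [Fintype ι]

def spectralMoment (α μ : ι → ℝ) (j : ℕ) : ℝ := ∑ i, α i ^ 2 * μ i ^ j

variable (α μ : ι → ℝ) (i₀ : ι)

theorem sq_mul_abs_pow_le_spectralMoment (n : ℕ) :
    α i₀ ^ 2 * |μ i₀| ^ (2 * n) ≤ spectralMoment α μ (2 * n) := by
  simp only [spectralMoment, pow_mul, sq_abs]
  exact single_le_sum (f := fun i => α i ^ 2 * (μ i ^ 2) ^ n) (fun i _ => by positivity)
    (mem_univ i₀)

theorem abs_spectralMoment_succ_sub_le [DecidableEq ι] {ρ : ℝ} (hρ : ∀ i ≠ i₀, |μ i| ≤ ρ)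
    (n : ℕ) :
    |spectralMoment α μ (2 * n + 1) - μ i₀ * spectralMoment α μ (2 * n)| ≤
      (|μ i₀| + ρ) * ρ ^ (2 * n) * ∑ i ∈ univ.erase i₀, α i ^ 2 := by
  have hdiff : spectralMoment α μ (2 * n + 1) - μ i₀ * spectralMoment α μ (2 * n) =
      ∑ i ∈ univ.erase i₀, α i ^ 2 * μ i ^ (2 * n) * (μ i - μ i₀) := by
    rw [sum_erase _ (by simp), spectralMoment, spectralMoment, mul_sum, ← sum_sub_distrib]
    exact sum_congr rfl fun i _ => by ring
  rw [hdiff, mul_sum]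
  refine (abs_sum_le_sum_abs _ _).trans (sum_le_sum fun i hi => ?_)
  have hμi := hρ i (ne_of_mem_erase hi)
  have hgap : |μ i - μ i₀| ≤ |μ i₀| + ρ := by
    linarith [abs_sub (μ i) (μ i₀)]
  rw [abs_mul, abs_mul, abs_pow, abs_pow, sq_abs]
  calc α i ^ 2 * |μ i| ^ (2 * n) * |μ i - μ i₀|
      ≤ α i ^ 2 * ρ ^ (2 * n) * (|μ i₀| + ρ) := by
        gcongr
        exact mul_nonneg (sq_nonneg _) (pow_nonneg ((abs_nonneg _).trans hμi) _)
    _ = (|μ i₀| + ρ) * ρ ^ (2 * n) * α i ^ 2 := by ring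

theorem abs_spectralMoment_div_sub_le [DecidableEq ι] (hα : ∑ i, α i ^ 2 = 1)
    (hα₀ : α i₀ ≠ 0) (hμ₀ : μ i₀ ≠ 0) {ρ : ℝ} (hρ : ∀ i ≠ i₀, |μ i| ≤ ρ) (n : ℕ) :
    |spectralMoment α μ (2 * n + 1) / spectralMoment α μ (2 * n) - μ i₀| ≤
      (|μ i₀| + ρ) * (ρ / |μ i₀|) ^ (2 * n) * ((1 - α i₀ ^ 2) / α i₀ ^ 2) := by
  have hlow := sq_mul_abs_pow_le_spectralMoment α μ i₀ n
  have hlow_pos : 0 < α i₀ ^ 2 * |μ i₀| ^ (2 * n) := by positivity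
  have hS : 0 < spectralMoment α μ (2 * n) := hlow_pos.trans_le hlow
  have htail : ∑ i ∈ univ.erase i₀, α i ^ 2 = 1 - α i₀ ^ 2 := by
    linarith [add_sum_erase univ (fun i => α i ^ 2) (mem_univ i₀)]
  have hnum := abs_spectralMoment_succ_sub_le α μ i₀ hρ n
  rw [htail] at hnum
  calc |spectralMoment α μ (2 * n + 1) / spectralMoment α μ (2 * n) - μ i₀|
      = |spectralMoment α μ (2 * n + 1) - μ i₀ * spectralMoment α μ (2 * n)| /
          spectralMoment α μ (2 * n) := by
        rw [← abs_of_pos hS, ← abs_div, abs_of_pos hS, sub_div, mul_div_cancel_right₀ _ hS.ne']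
    _ ≤ (|μ i₀| + ρ) * ρ ^ (2 * n) * (1 - α i₀ ^ 2) / (α i₀ ^ 2 * |μ i₀| ^ (2 * n)) :=
        div_le_div₀ ((abs_nonneg _).trans hnum) hnum hlow_pos hlow
    _ = (|μ i₀| + ρ) * (ρ / |μ i₀|) ^ (2 * n) * ((1 - α i₀ ^ 2) / α i₀ ^ 2) := by
        rw [div_pow]
        field_simp

end SpectralMoment

/-- Power iteration Rayleigh quotient bound:
`|λ̂_k - λ_1| ≤ (|λ_1| + |λ_2|) (|λ_2|/|λ_1|)^{2k} (1-α₁²)/α₁²`. -/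
theorem power_iteration_rayleigh_bound {m : ℕ} (hm : 1 < m)
    (A : Matrix (Fin m) (Fin m) ℝ)
    (lam : Fin m → ℝ) (u : Fin m → EuclideanSpace ℝ (Fin m))
    (horth : ∀ i j, (inner ℝ (u i) (u j) : ℝ) = if i = j then 1 else 0)
    (heig : ∀ i, Matrix.toEuclideanLin A (u i) = lam i • u i)
    (hmono : ∀ i j : Fin m, i ≤ j → |lam j| ≤ |lam i|)
    (hdom : ∀ i : Fin m, i ≠ ⟨0, by omega⟩ → |lam i| < |lam (⟨0, by omega⟩ : Fin m)|)
    (v : ℕ → EuclideanSpace ℝ (Fin m)) (hv0 : ‖v 0‖ = 1)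
    (α₁ : ℝ) (hα₁ : α₁ = (inner ℝ (u (⟨0, by omega⟩ : Fin m)) (v 0) : ℝ)) (hα₁ne : α₁ ≠ 0)
    (hrec : ∀ k, v (k + 1) =
      ‖Matrix.toEuclideanLin A (v k)‖⁻¹ • Matrix.toEuclideanLin A (v k)) :
    ∀ k : ℕ,
      |(inner ℝ (v k) (Matrix.toEuclideanLin A (v k)) : ℝ) - lam (⟨0, by omega⟩ : Fin m)| ≤
        (|lam (⟨0, by omega⟩ : Fin m)| + |lam (⟨1, hm⟩ : Fin m)|) *
          (|lam (⟨1, hm⟩ : Fin m)| / |lam (⟨0, by omega⟩ : Fin m)|) ^ (2 * k) *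
          ((1 - α₁ ^ 2) / α₁ ^ 2) := by
  intro k
  set T := Matrix.toEuclideanLin A
  have hon : Orthonormal ℝ u := orthonormal_iff_ite.mpr horth
  let b := OrthonormalBasis.mk hon
    (hon.linearIndependent.span_eq_top_of_card_eq_finrank' (by simp)).ge
  have hb : ⇑b = u := OrthonormalBasis.coe_mk _ _
  have hT : ∀ i, T (b i) = lam i • b i := by rw [hb]; exact heig
  have hparseval : ∑ i, ⟪b i, v 0⟫ ^ 2 = 1 := by
    simpa [hv0] using b.sum_sq_norm_inner_right (v 0)
  have hρ : ∀ i ≠ ⟨0, by omega⟩, |lam i| ≤ |lam ⟨1, hm⟩| := fun i hi =>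
    hmono _ i (Fin.le_def.mpr (Nat.one_le_iff_ne_zero.mpr (Fin.ext_iff.not.mp hi)))
  have hlam₀ : lam ⟨0, by omega⟩ ≠ 0 := abs_pos.mp
    ((abs_nonneg _).trans_lt (hdom ⟨1, hm⟩ (by simp [Fin.ext_iff])))
  rw [powerIteration_eq_normalize_pow T hv0 hrec k, real_inner_normalize_map_normalize,
    ← Module.End.mul_apply, ← pow_succ', ← real_inner_self_eq_norm_sq,
    b.inner_pow_map_pow_map_of_apply_eq_smul hT, b.inner_pow_map_pow_map_of_apply_eq_smul hT,
    show k + (k + 1) = 2 * k + 1 by omega, ← two_mul, hα₁, ← hb]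
  rw [hα₁, ← hb] at hα₁ne
  exact abs_spectralMoment_div_sub_le (fun i => ⟪b i, v 0⟫) lam _ hparseval hα₁ne hlam₀ hρ k
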